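/- arXiv:1912.04897 — 7 statements merged into one kernel-verified Lean document; each statement's English description precedes it below -/
import Mathlib

section
/- Every (r, s-r+1)-formation contains u, where u is any sequence of length s with exactly r distinct letters. -/
/-- `f` is an `(r, s)`-formation: a concatenation of `s` permutations of the same
set of `r` distinct letters. -/
def IsFormation (r s : ℕ) (f : List ℕ) : Prop :=
  ∃ (S : Finset ℕ) (blocks : List (List ℕ)),
    S.card = r ∧ blocks.length = s ∧ f = blocks.flatten ∧
    ∀ b ∈ blocks, b.Nodup ∧ b.toFinset = S

/-- `f` contains `u`: some injective renaming of the letters of `u` is a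
(not necessarily contiguous) subsequence of `f`. -/
def Contains (f u : List ℕ) : Prop :=
  ∃ φ : ℕ → ℕ, Set.InjOn φ {a | a ∈ u} ∧ (u.map φ).Sublist f

/-- `w` is the formation width of `u`: the least `s` such that there exists `r`
for which every `(r, s)`-formation contains `u`. -/
def FWidth (u : List ℕ) (w : ℕ) : Prop :=
  IsLeast {s | ∃ r, ∀ f, IsFormation r s f → Contains f u} w

lemma flatten_erase_sublist (z : ℕ) : ∀ bs : List (List ℕ),
    ((bs.map (·.erase z)).flatten).Sublist bs.flatten := by
  intro bs
  induction bs with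
  | nil => simp
  | cons b bs ih => simpa using (List.erase_sublist : (b.erase z).Sublist b).append ih

lemma aux : ∀ n (u f : List ℕ), u.length = n →
    IsFormation u.toFinset.card (u.length - u.toFinset.card + 1) f → Contains f u := by
  intro n
  induction n using Nat.strong_induction_on with
  | _ n IH =>
  intro u f hn hf
  rcases List.eq_nil_or_concat u with rfl | ⟨l, x, hu⟩
  · exact ⟨id, by simp, by simp⟩
  rw [List.concat_eq_append] at hu
  subst hu
  obtain ⟨S, blocks, hS, hbl, rfl, hperm⟩ := hf
  have hrle : (l ++ [x]).toFinset.card ≤ (l ++ [x]).length := List.toFinset_card_le _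
  set r := (l ++ [x]).toFinset.card with hr
  set s := (l ++ [x]).length with hs
  have hls : l.length + 1 = s := by rw [hs]; simp
  have hn' : l.length < n := by rw [← hn]; simp [hs]
  have hblne : blocks ≠ [] := by
    intro h; rw [h] at hbl; simp at hbl
  rcases List.eq_nil_or_concat blocks with h | ⟨bs, B, hblocks⟩
  · exact absurd h hblne
  rw [List.concat_eq_append] at hblocks
  subst hblocks
  have hbl' : bs.length + 1 = s - r + 1 := by
    rw [← hbl, List.length_append, List.length_singleton]
  have hB : B ∈ bs ++ [B] := by simp
  obtain ⟨hBnd, hBS⟩ := hperm B hB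
  by_cases hx : x ∈ l
  · -- Case A : last letter repeats
    have hlt : l.toFinset = (l ++ [x]).toFinset := by
      ext a
      simp only [List.mem_toFinset, List.mem_append, List.mem_singleton]
      exact ⟨Or.inl, fun h => h.elim id fun h' => h' ▸ hx⟩
    have hlr : l.toFinset.card = r := by rw [hlt]
    have hsl : r ≤ l.length := hlr ▸ List.toFinset_card_le _
    have hbs : bs.length = l.length - l.toFinset.card + 1 := by
      rw [hlr]; omega
    have hform : IsFormation l.toFinset.card (l.length - l.toFinset.card + 1) bs.flatten :=
      ⟨S, bs, by rw [hlr, hS], hbs, rfl, fun b hb => hperm b (by simp [hb])⟩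
    obtain ⟨φ, hinj, hsub⟩ := IH l.length hn' l bs.flatten rfl hform
    refine ⟨φ, ?_, ?_⟩
    · intro a ha b hb hab
      simp only [Set.mem_setOf_eq, List.mem_append, List.mem_singleton] at ha hb
      have ha' : a ∈ l := ha.elim id fun h => h ▸ hx
      have hb' : b ∈ l := hb.elim id fun h => h ▸ hx
      exact hinj ha' hb' hab
    · show (List.map φ (l ++ [x])).Sublist ((bs ++ [B]).flatten)
      rw [List.map_append, List.flatten_append]
      refine hsub.append ?_
      simp only [List.map_singleton, List.flatten_singleton]
      rw [List.singleton_sublist]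
      have hφx : φ x ∈ bs.flatten := hsub.mem (List.mem_map_of_mem (f := φ) hx)
      rcases List.mem_flatten.1 hφx with ⟨b, hb, hφb⟩
      have h2 := (hperm b (by simp [hb])).2
      have h3 : φ x ∈ S := by rw [← h2]; exact List.mem_toFinset.2 hφb
      rw [← hBS] at h3; exact List.mem_toFinset.1 h3
  · -- Case B : last letter is unique
    have hrpos : 1 ≤ r := by
      rw [hr]; exact Finset.card_pos.2 ⟨x, by simp⟩
    have hBne : B ≠ [] := by
      intro h; rw [h] at hBS; simp at hBS; rw [← hBS] at hS; simp at hS; omega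
    set z := B.getLast hBne with hz
    have hzB : z ∈ B := List.getLast_mem hBne
    have hzS : z ∈ S := by rw [← hBS]; exact List.mem_toFinset.2 hzB
    have hlcard : l.toFinset.card = r - 1 := by
      have h1 : (l ++ [x]).toFinset = insert x l.toFinset := by
        ext a
        simp only [List.mem_toFinset, List.mem_append, List.mem_singleton, Finset.mem_insert]
        tauto
      have h2 : r = l.toFinset.card + 1 := by
        rw [hr, h1, Finset.card_insert_of_notMem (fun h => hx (List.mem_toFinset.1 h))]
      omega
    set blocks' := (bs ++ [B]).map (·.erase z) with hbl2
    have hform : IsFormation l.toFinset.card (l.length - l.toFinset.card + 1) blocks'.flatten := by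
      refine ⟨S.erase z, blocks', ?_, ?_, rfl, ?_⟩
      · rw [Finset.card_erase_of_mem hzS, hS, hlcard]
      · have : blocks'.length = bs.length + 1 := by simp [hbl2]
        rw [this]; omega
      · intro b hb
        rcases List.mem_map.1 hb with ⟨b', hb', rfl⟩
        obtain ⟨hnd, hbS⟩ := hperm b' hb'
        refine ⟨hnd.erase z, ?_⟩
        ext a
        rw [List.mem_toFinset, hnd.mem_erase_iff, Finset.mem_erase, ← hbS, List.mem_toFinset]
    obtain ⟨φ, hinj, hsub⟩ := IH l.length hn' l blocks'.flatten rfl hform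
    have hφne : ∀ a ∈ l, φ a ≠ z := by
      intro a ha
      have h1 : φ a ∈ blocks'.flatten := hsub.mem (List.mem_map_of_mem (f := φ) ha)
      rcases List.mem_flatten.1 h1 with ⟨b, hb, hφb⟩
      rcases List.mem_map.1 hb with ⟨b', hb', rfl⟩
      exact ((hperm b' hb').1.mem_erase_iff.1 hφb).1
    refine ⟨fun a => if a = x then z else φ a, ?_, ?_⟩
    · intro a ha b hb hab
      simp only [Set.mem_setOf_eq, List.mem_append, List.mem_singleton] at ha hb
      simp only at hab
      by_cases hax : a = x
      · by_cases hbx : b = x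
        · rw [hax, hbx]
        · have hb' : b ∈ l := hb.resolve_right hbx
          rw [if_pos hax, if_neg hbx] at hab
          exact absurd hab.symm (hφne b hb')
      · have ha' : a ∈ l := ha.resolve_right hax
        by_cases hbx : b = x
        · rw [if_neg hax, if_pos hbx] at hab
          exact absurd hab (hφne a ha')
        · rw [if_neg hax, if_neg hbx] at hab
          exact hinj ha' (hb.resolve_right hbx) hab
    · show (List.map (fun a => if a = x then z else φ a) (l ++ [x])).Sublist
        ((bs ++ [B]).flatten)
      have hmapl : l.map (fun a => if a = x then z else φ a) = l.map φ :=
        List.map_congr_left fun a ha => if_neg (by rintro rfl; exact hx ha)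
      rw [List.map_append, hmapl]
      simp only [List.map_singleton, if_pos rfl]
      have hBsplit : B.erase z ++ [z] = B := by
        have hdl : B.dropLast ++ [z] = B := List.dropLast_append_getLast hBne
        have hnd' : (B.dropLast ++ [z]).Nodup := by rw [hdl]; exact hBnd
        have hznd : z ∉ B.dropLast := fun h =>
          (List.disjoint_of_nodup_append hnd') h (by simp)
        have herase : B.erase z = B.dropLast := by
          conv_lhs => rw [← hdl]
          rw [List.erase_append_right _ hznd]
          simp
        rw [herase, hdl]
      have h1 : (l.map φ ++ [z]).Sublist (blocks'.flatten ++ [z]) :=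
        hsub.append (List.Sublist.refl _)
      have h2 : blocks'.flatten ++ [z] = (bs.map (·.erase z)).flatten ++ B := by
        simp only [hbl2, List.map_append, List.map_singleton, List.flatten_append,
          List.flatten_singleton, List.append_assoc, hBsplit]
      have h3 : ((bs.map (·.erase z)).flatten ++ B).Sublist ((bs ++ [B]).flatten) := by
        rw [List.flatten_append, List.flatten_singleton]
        exact (flatten_erase_sublist z bs).append (List.Sublist.refl _)
      exact h1.trans (h2 ▸ h3)

theorem stmt1 (r s : ℕ) (u : List ℕ) (hlen : u.length = s)
    (hr : u.toFinset.card = r) :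
    ∀ f : List ℕ, IsFormation r (s - r + 1) f → Contains f u := by
  subst hlen hr
  intro f hf
  exact aux u.length u f rfl hf
end

section
/- For all t ≥ 1, the formation width of the alternation (ab)^t (the sequence a b a b ... a b of length 2t) is 2t - 1. -/
/-- Alternating sequence `c d c d ...` of length `n`. -/
def alt : ℕ → ℕ → ℕ → List ℕ
  | _, _, 0 => []
  | c, d, n+1 => c :: alt d c n

lemma alt_succ_succ (c d n : ℕ) : alt c d (n+2) = c :: d :: alt c d n := rfl

lemma alt_length (c d : ℕ) : ∀ n, (alt c d n).length = n := by
  intro n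
  induction n generalizing c d with
  | zero => rfl
  | succ n ih => simp [alt, ih]

lemma alt_mem (c d : ℕ) : ∀ n, ∀ z ∈ alt c d n, z = c ∨ z = d := by
  intro n
  induction n generalizing c d with
  | zero => simp [alt]
  | succ n ih =>
    intro z hz
    rcases List.mem_cons.mp hz with h | h
    · exact Or.inl h
    · rcases ih d c z h with h | h
      · exact Or.inr h
      · exact Or.inl h

lemma alt_head (c d n : ℕ) : ∀ z ∈ (alt c d n).head?, z = c := by
  cases n <;> simp [alt]

lemma alt_chain' (c d : ℕ) (h : c ≠ d) : ∀ n, (alt c d n).IsChain (· ≠ ·) := by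
  intro n
  induction n generalizing c d with
  | zero => simp [alt]
  | succ n ih =>
    show (c :: alt d c n).IsChain (· ≠ ·)
    refine List.isChain_cons.mpr ⟨?_, ih d c h.symm⟩
    intro z hz
    rw [alt_head d c n z hz]
    exact h

/-- `x y y x x y ...`: concatenation of `s` two-letter blocks alternating `[x,y]`, `[y,x]`. -/
def Wd : ℕ → ℕ → ℕ → List ℕ
  | _, _, 0 => []
  | x, y, s+1 => x :: y :: Wd y x s

/-- Runs of `x :: Wd x y s`. -/
def Mr : ℕ → ℕ → ℕ → List (List ℕ)
  | x, _, 0 => [[x]]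
  | x, y, s+1 => [x, x] :: Mr y x s

lemma Mr_join (x y : ℕ) : ∀ s, (Mr x y s).flatten = x :: Wd x y s := by
  intro s
  induction s generalizing x y with
  | zero => rfl
  | succ s ih => simp [Mr, Wd, ih y x]

lemma Mr_length (x y : ℕ) : ∀ s, (Mr x y s).length = s + 1 := by
  intro s
  induction s generalizing x y with
  | zero => rfl
  | succ s ih => simp [Mr, ih y x]

lemma Mr_const (x y : ℕ) : ∀ s, ∀ r ∈ Mr x y s, ∀ z1 ∈ r, ∀ z2 ∈ r, z1 = z2 := by
  intro s
  induction s generalizing x y with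
  | zero =>
    intro r hr z1 h1 z2 h2
    simp [Mr] at hr
    subst hr
    simp at h1 h2
    omega
  | succ s ih =>
    intro r hr z1 h1 z2 h2
    rcases List.mem_cons.mp hr with rfl | hr
    · simp at h1 h2
      omega
    · exact ih y x r hr z1 h1 z2 h2

lemma lenRuns : ∀ (rs : List (List ℕ)) (v : List ℕ),
    (∀ r ∈ rs, ∀ z1 ∈ r, ∀ z2 ∈ r, z1 = z2) →
    v.IsChain (· ≠ ·) → v.Sublist rs.flatten → v.length ≤ rs.length := by
  intro rs
  induction rs with
  | nil =>
    intro v _ _ hv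
    simp at hv
    simp [hv]
  | cons r rs ih =>
    intro v hconst hch hv
    simp only [List.flatten_cons] at hv
    obtain ⟨v1, v2, rfl, h1, h2⟩ := List.sublist_append_iff.mp hv
    have hch2 := List.isChain_append.mp hch
    have hv1 : v1.length ≤ 1 := by
      match v1, h1, hch2 with
      | [], _, _ => simp
      | [z], _, _ => simp
      | z1 :: z2 :: w, h1, hch2 =>
        exfalso
        have hz1 : z1 ∈ r := h1.subset (by simp)
        have hz2 : z2 ∈ r := h1.subset (by simp)
        have heq := hconst r (by simp) z1 hz1 z2 hz2
        exact (List.isChain_cons_cons.mp hch2.1).1 heq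
    have hv2 := ih v2 (fun r' hr' => hconst r' (by simp [hr'])) hch2.2.1 h2
    simp only [List.length_append, List.length_cons]
    omega

lemma sublist_Wd (x y s : ℕ) (v : List ℕ) (hch : v.IsChain (· ≠ ·))
    (hv : v.Sublist (Wd x y s)) : v.length ≤ s + 1 := by
  cases s with
  | zero =>
    have : v = [] := List.sublist_nil.mp hv
    simp [this]
  | succ s =>
    have hj : ([x] :: Mr y x s).flatten = Wd x y (s+1) := by
      simp [List.flatten_cons, Mr_join, Wd]
    have hconst : ∀ r ∈ ([x] :: Mr y x s), ∀ z1 ∈ r, ∀ z2 ∈ r, z1 = z2 := by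
      intro r hr
      rcases List.mem_cons.mp hr with rfl | hr
      · intro z1 h1 z2 h2; simp at h1 h2; omega
      · exact Mr_const y x s r hr
    have := lenRuns ([x] :: Mr y x s) v hconst hch (by rw [hj]; exact hv)
    simp [Mr_length] at this
    omega

lemma twoElt (x y : ℕ) (hxy : x ≠ y) : ∀ (l : List ℕ), l.Nodup → x ∈ l → y ∈ l →
    (∀ z ∈ l, z = x ∨ z = y) → l = [x, y] ∨ l = [y, x] := by
  intro l
  match l with
  | [] => intro _ hx; simp at hx
  | [c] =>
    intro _ hx hy _
    simp at hx hy
    exact absurd (hx.trans hy.symm) hxy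
  | c :: d :: rest =>
    intro hnd hx hy hall
    have hc := hall c (by simp)
    have hd := hall d (by simp)
    have hrest : rest = [] := by
      rcases rest with _ | ⟨e, rest⟩
      · rfl
      · exfalso
        have he := hall e (by simp)
        simp [List.nodup_cons] at hnd
        rcases hc with rfl | rfl <;> rcases hd with rfl | rfl <;>
          rcases he with rfl | rfl <;> tauto
    subst hrest
    have hcd : c ≠ d := by
      simp [List.nodup_cons] at hnd
      tauto
    rcases hc with rfl | rfl <;> rcases hd with rfl | rfl <;> tauto

lemma F1 (x y : ℕ) : ∀ (blocks : List (List ℕ)),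
    (∀ bk ∈ blocks, bk = [x, y] ∨ bk = [y, x]) →
    ∀ c d, ((c = x ∧ d = y) ∨ (c = y ∧ d = x)) →
    (alt c d blocks.length).Sublist blocks.flatten := by
  intro blocks
  induction blocks with
  | nil => simp [alt]
  | cons bk rest ih =>
    intro hbs c d hcd
    have hc : c ∈ bk := by
      rcases hbs bk (by simp) with h | h <;>
        rcases hcd with ⟨rfl, rfl⟩ | ⟨rfl, rfl⟩ <;> simp [h]
    have ihr := ih (fun b hb => hbs b (by simp [hb])) d c (by tauto)
    show (c :: alt d c rest.length).Sublist (bk ++ rest.flatten)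
    have h := List.Sublist.append (List.singleton_sublist.mpr hc) ihr
    simpa using h

def Bb : List ℕ → ℕ → List (List ℕ)
  | _, 0 => []
  | L, s+1 => L :: Bb L.reverse s

lemma Bb_length : ∀ s (L : List ℕ), (Bb L s).length = s := by
  intro s
  induction s with
  | zero => intro L; rfl
  | succ s ih => intro L; simp [Bb, ih]

lemma Bb_mem : ∀ s (L : List ℕ), ∀ b ∈ Bb L s, b = L ∨ b = L.reverse := by
  intro s
  induction s with
  | zero => simp [Bb]
  | succ s ih =>
    intro L b hb
    rcases List.mem_cons.mp hb with rfl | hb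
    · exact Or.inl rfl
    · rcases ih L.reverse b hb with h | h
      · exact Or.inr h
      · left; rw [h, List.reverse_reverse]

lemma Bb_filter (P : ℕ → Bool) : ∀ s (L : List ℕ) p q, L.filter P = [p, q] →
    ((Bb L s).flatten).filter P = Wd p q s := by
  intro s
  induction s with
  | zero => intro L p q _; rfl
  | succ s ih =>
    intro L p q hL
    show ((L ++ (Bb L.reverse s).flatten).filter P) = Wd p q (s+1)
    rw [List.filter_append, hL, ih L.reverse q p (by rw [List.filter_reverse, hL]; rfl)]
    rfl

lemma map_alt (a b : ℕ) (φ : ℕ → ℕ) : ∀ t,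
    ((List.replicate t [a, b]).flatten).map φ = alt (φ a) (φ b) (2 * t) := by
  intro t
  induction t with
  | zero => rfl
  | succ t ih =>
    rw [List.replicate_succ]
    show (([a, b] ++ (List.replicate t [a, b]).flatten).map φ) = _
    rw [List.map_append, ih]
    have h2 : 2 * (t + 1) = 2 * t + 2 := by ring
    rw [h2, alt_succ_succ]
    rfl

lemma mem_alternation (a b : ℕ) (t : ℕ) :
    ∀ z ∈ (List.replicate t [a, b]).flatten, z = a ∨ z = b := by
  intro z hz
  obtain ⟨l, hl, hzl⟩ := List.mem_flatten.mp hz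
  rw [List.eq_of_mem_replicate hl] at hzl
  simpa using hzl

lemma a_mem_alternation (a b : ℕ) (t : ℕ) (ht : 1 ≤ t) :
    a ∈ (List.replicate t [a, b]).flatten ∧ b ∈ (List.replicate t [a, b]).flatten := by
  constructor <;>
    exact List.mem_flatten.mpr ⟨[a, b], List.mem_replicate.mpr ⟨by omega, rfl⟩, by simp⟩

theorem stmt3 (t : ℕ) (ht : 1 ≤ t) (a b : ℕ) (hab : a ≠ b) :
    FWidth ((List.replicate (t) [a, b]).flatten) (2 * t - 1) := by
  constructor
  · -- membership: with r = 2, every (2, 2t-1)-formation contains the alternation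
    refine ⟨2, ?_⟩
    intro f hf
    obtain ⟨S, blocks, hS, hlen, hjoin, hblocks⟩ := hf
    obtain ⟨x, y, hxy, rfl⟩ := Finset.card_eq_two.mp hS
    have hbk : ∀ bk ∈ blocks, bk = [x, y] ∨ bk = [y, x] := by
      intro bk hbkm
      obtain ⟨hnd, hfs⟩ := hblocks bk hbkm
      refine twoElt x y hxy bk hnd ?_ ?_ ?_
      · rw [← List.mem_toFinset, hfs]; simp
      · rw [← List.mem_toFinset, hfs]; simp
      · intro z hz
        have hz' : z ∈ bk.toFinset := List.mem_toFinset.mpr hz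
        rw [hfs] at hz'
        simpa using hz'
    obtain ⟨bk, rest, rfl⟩ : ∃ bk rest, blocks = bk :: rest := by
      cases blocks with
      | nil => exfalso; simp at hlen; omega
      | cons bk rest => exact ⟨bk, rest, rfl⟩
    have hrlen : rest.length + 2 = 2 * t := by
      simp at hlen
      omega
    obtain ⟨c, d, hcd, hbkcd⟩ :
        ∃ c d, ((c = x ∧ d = y) ∨ (c = y ∧ d = x)) ∧ bk = [c, d] := by
      rcases hbk bk (by simp) with h | h
      · exact ⟨x, y, Or.inl ⟨rfl, rfl⟩, h⟩
      · exact ⟨y, x, Or.inr ⟨rfl, rfl⟩, h⟩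
    have hcdne : c ≠ d := by
      rcases hcd with ⟨rfl, rfl⟩ | ⟨rfl, rfl⟩
      · exact hxy
      · exact hxy.symm
    have hsub : (alt c d (2 * t)).Sublist f := by
      have h1 := F1 x y rest (fun b hb => hbk b (by simp [hb])) c d hcd
      have h2 : (alt c d (rest.length + 2)).Sublist (bk ++ rest.flatten) := by
        rw [alt_succ_succ, hbkcd]
        have := List.Sublist.append (List.Sublist.refl [c, d]) h1
        simpa using this
      rw [hrlen] at h2
      rw [hjoin]
      exact h2
    refine ⟨fun z => if z = a then c else d, ?_, ?_⟩
    · intro z1 hz1 z2 hz2 heq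
      have h1 := mem_alternation a b t z1 hz1
      have h2 := mem_alternation a b t z2 hz2
      rcases h1 with rfl | rfl <;> rcases h2 with rfl | rfl
      · rfl
      · exfalso; simp [hab.symm] at heq; exact hcdne heq
      · exfalso; simp [hab.symm] at heq; exact hcdne heq.symm
      · rfl
    · rw [map_alt]
      have hpa : (if a = a then c else d) = c := by simp
      have hpb : (if b = a then c else d) = d := by simp [hab.symm]
      rw [hpa, hpb]
      exact hsub
  · -- lower bound
    rintro s ⟨r, hr⟩
    by_contra hlt
    have hs : s + 1 ≤ 2 * t - 1 := by omega
    set L := List.range r with hL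
    have hform : IsFormation r s ((Bb L s).flatten) := by
      refine ⟨Finset.range r, Bb L s, by simp, Bb_length s L, rfl, ?_⟩
      intro bb hbb
      rcases Bb_mem s L bb hbb with rfl | rfl
      · exact ⟨List.nodup_range (n := r), by ext z; simp [hL]⟩
      · exact ⟨List.nodup_reverse.mpr (List.nodup_range (n := r)), by ext z; simp [hL]⟩
    obtain ⟨φ, hinj, hsub⟩ := hr _ hform
    obtain ⟨ha, hb⟩ := a_mem_alternation a b t ht
    have hxy : φ a ≠ φ b := fun h => hab (hinj ha hb h)
    have hmap := map_alt a b φ t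
    have hmemf : ∀ z ∈ ({a, b} : Set ℕ), φ z ∈ L := by
      intro z hz
      have hzin : φ z ∈ ((List.replicate t [a, b]).flatten).map φ := by
        rcases hz with rfl | rfl
        · exact List.mem_map.mpr ⟨z, ha, rfl⟩
        · exact List.mem_map.mpr ⟨z, hb, rfl⟩
      have hzf := hsub.subset hzin
      obtain ⟨bb, hbb, hzbb⟩ := List.mem_flatten.mp hzf
      rcases Bb_mem s L bb hbb with rfl | rfl
      · exact hzbb
      · exact List.mem_reverse.mp hzbb
    have hxL : φ a ∈ L := hmemf a (by simp)
    have hyL : φ b ∈ L := hmemf b (by simp)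
    set x := φ a
    set y := φ b
    set P : ℕ → Bool := fun z => z = x || z = y with hP
    have hfilterL : L.filter P = [x, y] ∨ L.filter P = [y, x] := by
      refine twoElt x y hxy _ ((List.nodup_range (n := r)).filter P) ?_ ?_ ?_
      · exact List.mem_filter.mpr ⟨hxL, by simp [hP]⟩
      · exact List.mem_filter.mpr ⟨hyL, by simp [hP]⟩
      · intro z hz
        have := (List.mem_filter.mp hz).2
        simpa [hP] using this
    have hvP : (alt x y (2 * t)).filter P = alt x y (2 * t) :=
      List.filter_eq_self.mpr (by
        intro z hz
        rcases alt_mem x y (2 * t) z hz with rfl | rfl <;> simp [hP])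
    have hsub2 : (alt x y (2 * t)).Sublist (((Bb L s).flatten).filter P) := by
      have := (hmap ▸ hsub).filter P
      rw [hvP] at this
      exact this
    have hbound : 2 * t ≤ s + 1 := by
      rcases hfilterL with h | h
      · have h2 := sublist_Wd x y s _ (alt_chain' x y hxy (2 * t))
          (by rw [Bb_filter P s L x y h] at hsub2; exact hsub2)
        simpa [alt_length] using h2
      · have h2 := sublist_Wd y x s _ (alt_chain' x y hxy (2 * t))
          (by rw [Bb_filter P s L y x h] at hsub2; exact hsub2)
        simpa [alt_length] using h2
    omega
end

section
/- For all l ≥ 2 and t ≥ 1, the formation width of (1 2 ... l)^t (the concatenation of t copies of the identity permutation on l letters) equals 2t - 1. -/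
namespace Stmt4
open List

open Classical in
noncomputable def chainsEnd (R : ℕ → ℕ → Prop) (T : Finset ℕ) (x : ℕ) : Finset (Finset ℕ) :=
  T.powerset.filter (fun s => x ∈ s ∧ (∀ p ∈ s, p ≤ x) ∧ ∀ p ∈ s, ∀ q ∈ s, p < q → R p q)

noncomputable def hgt (R : ℕ → ℕ → Prop) (T : Finset ℕ) (x : ℕ) : ℕ :=
  (chainsEnd R T x).sup Finset.card

open Classical in
lemma mem_chainsEnd {R : ℕ → ℕ → Prop} {T : Finset ℕ} {x : ℕ} {s : Finset ℕ} :
    s ∈ chainsEnd R T x ↔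
      s ⊆ T ∧ x ∈ s ∧ (∀ p ∈ s, p ≤ x) ∧ ∀ p ∈ s, ∀ q ∈ s, p < q → R p q := by
  simp [chainsEnd, Finset.mem_filter, Finset.mem_powerset, and_assoc]

lemma singleton_mem_chainsEnd {R : ℕ → ℕ → Prop} {T : Finset ℕ} {x : ℕ} (hx : x ∈ T) :
    ({x} : Finset ℕ) ∈ chainsEnd R T x := by
  rw [mem_chainsEnd]
  refine ⟨by simpa using hx, by simp, by simp, ?_⟩
  intro p hp q hq hpq
  simp only [Finset.mem_singleton] at hp hq
  omega

lemma exists_chain_card_hgt {R : ℕ → ℕ → Prop} {T : Finset ℕ} {x : ℕ} (hx : x ∈ T) :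
    ∃ s ∈ chainsEnd R T x, s.card = hgt R T x := by
  obtain ⟨s, hs, h⟩ := (chainsEnd R T x).exists_mem_eq_sup
    ⟨_, singleton_mem_chainsEnd (R := R) hx⟩ Finset.card
  exact ⟨s, hs, h.symm⟩

lemma one_le_hgt {R : ℕ → ℕ → Prop} {T : Finset ℕ} {x : ℕ} (hx : x ∈ T) :
    1 ≤ hgt R T x := by
  have := Finset.le_sup (f := Finset.card) (singleton_mem_chainsEnd (R := R) (T := T) hx)
  simpa [hgt] using this

lemma hgt_lt_hgt {R : ℕ → ℕ → Prop} {T : Finset ℕ} {x y : ℕ} (hx : x ∈ T) (hy : y ∈ T)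
    (hxy : x < y) (hR : R x y) (htr : ∀ p, R p x → R p y) :
    hgt R T x < hgt R T y := by
  obtain ⟨s, hs, hcard⟩ := exists_chain_card_hgt (R := R) hx
  rw [mem_chainsEnd] at hs
  obtain ⟨hsT, hxs, hle, hchain⟩ := hs
  have hynot : y ∉ s := fun h => absurd (hle y h) (by omega)
  have hmem : insert y s ∈ chainsEnd R T y := by
    rw [mem_chainsEnd]
    refine ⟨Finset.insert_subset hy hsT, Finset.mem_insert_self _ _, ?_, ?_⟩
    · intro p hp
      rcases Finset.mem_insert.1 hp with h | h
      · omega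
      · have := hle p h; omega
    · intro p hp q hq hpq
      rcases Finset.mem_insert.1 hp with h | h
      · subst h
        rcases Finset.mem_insert.1 hq with h' | h'
        · omega
        · have := hle q h'; omega
      · rcases Finset.mem_insert.1 hq with h' | h'
        · subst h'
          rcases eq_or_lt_of_le (hle p h) with h'' | h''
          · subst h''; exact hR
          · exact htr p (hchain p h x hxs h'')
        · exact hchain p h q h' hpq
  have := Finset.le_sup (f := Finset.card) hmem
  have hcard' : (insert y s).card = s.card + 1 := Finset.card_insert_of_notMem hynot
  simp only [hgt] at *
  omega

/-- Erdős–Szekeres. -/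
lemma es {g : ℕ → ℕ} {T : Finset ℕ} (hg : Set.InjOn g ↑T) {n : ℕ} (hn : n * n < T.card) :
    ∃ T' ⊆ T, T'.card = n + 1 ∧
      ((∀ p ∈ T', ∀ q ∈ T', p < q → g p < g q) ∨ (∀ p ∈ T', ∀ q ∈ T', p < q → g q < g p)) := by
  set Ri : ℕ → ℕ → Prop := fun p q => g p < g q with hRi
  set Rd : ℕ → ℕ → Prop := fun p q => g q < g p with hRd
  by_cases hbig : ∃ x ∈ T, n + 1 ≤ hgt Ri T x ∨ n + 1 ≤ hgt Rd T x
  · obtain ⟨x, hx, hcase⟩ := hbig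
    rcases hcase with hc | hc
    · obtain ⟨s, hs, hcard⟩ := exists_chain_card_hgt (R := Ri) hx
      rw [mem_chainsEnd] at hs
      obtain ⟨t', ht'⟩ := Finset.exists_subset_card_eq (s := s) (n := n + 1) (by omega)
      exact ⟨t', ht'.1.trans hs.1, ht'.2, Or.inl fun p hp q hq h =>
        hs.2.2.2 p (ht'.1 hp) q (ht'.1 hq) h⟩
    · obtain ⟨s, hs, hcard⟩ := exists_chain_card_hgt (R := Rd) hx
      rw [mem_chainsEnd] at hs
      obtain ⟨t', ht'⟩ := Finset.exists_subset_card_eq (s := s) (n := n + 1) (by omega)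
      exact ⟨t', ht'.1.trans hs.1, ht'.2, Or.inr fun p hp q hq h =>
        hs.2.2.2 p (ht'.1 hp) q (ht'.1 hq) h⟩
  · push_neg at hbig
    exfalso
    have hinj : Set.InjOn (fun x => (hgt Ri T x, hgt Rd T x)) ↑T := by
      intro x hx y hy hxyeq
      by_contra hne
      simp only [Finset.mem_coe] at hx hy
      have key : ∀ a b, a ∈ T → b ∈ T → a < b →
          (hgt Ri T a, hgt Rd T a) ≠ (hgt Ri T b, hgt Rd T b) := by
        intro a b ha hb hab
        have hgne : g a ≠ g b := fun h => absurd (hg ha hb h) (by omega)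
        rcases lt_or_gt_of_ne hgne with h | h
        · have := hgt_lt_hgt (R := Ri) ha hb hab h (fun p hp => lt_trans hp h)
          intro hcon; rw [Prod.mk.injEq] at hcon; omega
        · have := hgt_lt_hgt (R := Rd) ha hb hab h (fun p hp => lt_trans h hp)
          intro hcon; rw [Prod.mk.injEq] at hcon; omega
      rcases lt_or_gt_of_ne hne with h | h
      · exact key x y hx hy h hxyeq
      · exact key y x hy hx h hxyeq.symm
    have hmaps : ∀ x ∈ T, (hgt Ri T x, hgt Rd T x) ∈ Finset.Icc 1 n ×ˢ Finset.Icc 1 n := by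
      intro x hx
      have h1 := one_le_hgt (R := Ri) (T := T) hx
      have h2 := one_le_hgt (R := Rd) (T := T) hx
      have h3 := (hbig x hx).1
      have h4 := (hbig x hx).2
      simp only [Finset.mem_product, Finset.mem_Icc]
      omega
    have := Finset.card_le_card_of_injOn _ hmaps hinj
    rw [Finset.card_product, Nat.card_Icc] at this
    simp only [Nat.add_sub_cancel] at this
    omega

def incOn (b : List ℕ) (T : Finset ℕ) : Prop :=
  ∀ p ∈ T, ∀ q ∈ T, p < q → b.idxOf p < b.idxOf q

def decOn (b : List ℕ) (T : Finset ℕ) : Prop :=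
  ∀ p ∈ T, ∀ q ∈ T, p < q → b.idxOf q < b.idxOf p


lemma iter {l : ℕ} (hl : 1 ≤ l) : ∀ (bs : List (List ℕ)) (T : Finset ℕ),
    (∀ b ∈ bs, b.Nodup ∧ ∀ a ∈ T, a ∈ b) → l ^ 2 ^ bs.length ≤ T.card →
    ∃ T' ⊆ T, T'.card = l ∧ ∀ b ∈ bs, incOn b T' ∨ decOn b T' := by
  intro bs
  induction bs with
  | nil =>
    intro T _ hcard
    simp only [List.length_nil, pow_zero, pow_one] at hcard
    obtain ⟨T', hT'⟩ := Finset.exists_subset_card_eq hcard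
    exact ⟨T', hT'.1, hT'.2, fun b hb => absurd hb List.not_mem_nil⟩
  | cons b bs ih =>
    intro T hprop hcard
    set m := l ^ 2 ^ bs.length with hm
    have hm1 : 1 ≤ m := Nat.one_le_pow _ _ (by omega)
    have hmm : l ^ 2 ^ (b :: bs).length = m * m := by
      simp only [List.length_cons, pow_succ, pow_mul, hm]
      ring
    have hb := hprop b (by simp)
    have hginj : Set.InjOn (fun a => b.idxOf a) ↑T := by
      intro p hp q hq h
      exact (List.idxOf_inj (hb.2 p (by simpa using hp))).1 h
    have hn : (m - 1) * (m - 1) < T.card := by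
      have : (m - 1) * (m - 1) < m * m := by
        have : m - 1 < m := by omega
        exact Nat.mul_lt_mul_of_lt_of_le this (by omega) (by omega)
      omega
    obtain ⟨T₁, hT₁T, hT₁card, hT₁mono⟩ := es hginj hn
    have hT₁card' : T₁.card = m := by omega
    obtain ⟨T', hT'T₁, hT'card, hT'all⟩ := ih T₁
      (fun b' hb' => ⟨(hprop b' (by simp [hb'])).1,
        fun a ha => (hprop b' (by simp [hb'])).2 a (hT₁T ha)⟩)
      (by omega)
    refine ⟨T', hT'T₁.trans hT₁T, hT'card, ?_⟩
    intro b' hb'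
    rcases List.mem_cons.1 hb' with h | h
    · subst h
      rcases hT₁mono with h | h
      · exact Or.inl fun p hp q hq hpq => h p (hT'T₁ hp) q (hT'T₁ hq) hpq
      · exact Or.inr fun p hp q hq hpq => h p (hT'T₁ hp) q (hT'T₁ hq) hpq
    · exact hT'all b' h

lemma pairwise_indexOf {b : List ℕ} (hb : b.Nodup) :
    b.Pairwise (fun p q => b.idxOf p < b.idxOf q) := by
  rw [List.pairwise_iff_getElem]
  intro i j hi hj hij
  rw [hb.idxOf_getElem i hi, hb.idxOf_getElem j hj]
  exact hij

instance : IsAntisymm ℕ (· < ·) where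
  antisymm a b h1 h2 := by omega
instance : IsAntisymm ℕ (· > ·) where
  antisymm a b h1 h2 := by omega

lemma filter_perm_sort {b : List ℕ} (hb : b.Nodup) {T : Finset ℕ} (hTb : ∀ a ∈ T, a ∈ b) :
    b.filter (fun a => decide (a ∈ T)) ~ T.sort (· ≤ ·) := by
  apply List.perm_of_nodup_nodup_toFinset_eq (hb.filter _) (T.sort_nodup _)
  ext a
  simp only [List.mem_toFinset, List.mem_filter, Finset.mem_sort, decide_eq_true_eq]
  exact ⟨fun h => h.2, fun h => ⟨hTb a h, h⟩⟩

lemma filter_eq_sort {b : List ℕ} (hb : b.Nodup) {T : Finset ℕ} (hTb : ∀ a ∈ T, a ∈ b)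
    (hinc : incOn b T) : b.filter (fun a => decide (a ∈ T)) = T.sort (· ≤ ·) := by
  have hs1 : (b.filter (fun a => decide (a ∈ T))).Pairwise (· < ·) := by
    have h1 : (b.filter (fun a => decide (a ∈ T))).Pairwise
        (fun p q => b.idxOf p < b.idxOf q) :=
      (pairwise_indexOf hb).sublist (List.filter_sublist (l := b))
    refine List.Pairwise.imp_of_mem ?_ h1
    intro p q hp hq h
    have hpT : p ∈ T := by simpa using (List.mem_filter.1 hp).2
    have hqT : q ∈ T := by simpa using (List.mem_filter.1 hq).2
    rcases lt_trichotomy p q with h' | h' | h'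
    · exact h'
    · subst h'; omega
    · exact absurd (hinc q hqT p hpT h') (by omega)
  exact List.Perm.eq_of_pairwise' hs1 T.sortedLT_sort.pairwise (filter_perm_sort hb hTb)

lemma filter_eq_sort_rev {b : List ℕ} (hb : b.Nodup) {T : Finset ℕ} (hTb : ∀ a ∈ T, a ∈ b)
    (hdec : decOn b T) : b.filter (fun a => decide (a ∈ T)) = (T.sort (· ≤ ·)).reverse := by
  have hs1 : (b.filter (fun a => decide (a ∈ T))).Pairwise (· > ·) := by
    have h1 : (b.filter (fun a => decide (a ∈ T))).Pairwise
        (fun p q => b.idxOf p < b.idxOf q) :=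
      (pairwise_indexOf hb).sublist (List.filter_sublist (l := b))
    refine List.Pairwise.imp_of_mem ?_ h1
    intro p q hp hq h
    have hpT : p ∈ T := by simpa using (List.mem_filter.1 hp).2
    have hqT : q ∈ T := by simpa using (List.mem_filter.1 hq).2
    rcases lt_trichotomy p q with h' | h' | h'
    · exact absurd (hdec p hpT q hqT h') (by omega)
    · subst h'; omega
    · exact h'
  have hs2 : ((T.sort (· ≤ ·)).reverse).Pairwise (· > ·) := by
    rw [List.pairwise_reverse]
    exact T.sortedLT_sort.pairwise
  exact List.Perm.eq_of_pairwise' hs1 hs2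
    ((filter_perm_sort hb hTb).trans (List.reverse_perm _).symm)

lemma sublist_of_incOn {b : List ℕ} (hb : b.Nodup) {T : Finset ℕ} (hTb : ∀ a ∈ T, a ∈ b)
    (hinc : incOn b T) : (T.sort (· ≤ ·)) <+ b := by
  rw [← filter_eq_sort hb hTb hinc]; exact List.filter_sublist (l := b)

lemma sublist_of_decOn {b : List ℕ} (hb : b.Nodup) {T : Finset ℕ} (hTb : ∀ a ∈ T, a ∈ b)
    (hdec : decOn b T) : (T.sort (· ≤ ·)).reverse <+ b := by
  rw [← filter_eq_sort_rev hb hTb hdec]; exact List.filter_sublist (l := b)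

lemma two_choice {y z : List ℕ} : ∀ (bs : List (List ℕ)) (ty tz : ℕ),
    (∀ b ∈ bs, y <+ b ∨ z <+ b) → ty + tz ≤ bs.length + 1 →
    (List.replicate ty y).flatten <+ bs.flatten ∨ (List.replicate tz z).flatten <+ bs.flatten := by
  intro bs
  induction bs with
  | nil =>
    intro ty tz _ hc
    simp only [List.length_nil] at hc
    rcases Nat.eq_zero_or_pos ty with h | h
    · subst h; exact Or.inl (by simp)
    · have : tz = 0 := by omega
      subst this; exact Or.inr (by simp)
  | cons b bs ih =>
    intro ty tz hall hc
    rcases hall b (by simp) with hyb | hzb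
    · rcases Nat.eq_zero_or_pos ty with h | h
      · subst h; exact Or.inl (by simp)
      · obtain ⟨n, rfl⟩ : ∃ n, ty = n + 1 := ⟨ty - 1, by omega⟩
        rcases ih n tz (fun b' hb' => hall b' (by simp [hb'])) (by simp at hc ⊢; omega) with h | h
        · exact Or.inl (by simpa [List.replicate_succ, List.flatten_cons] using hyb.append h)
        · exact Or.inr (h.trans (List.sublist_append_right _ _))
    · rcases Nat.eq_zero_or_pos tz with h | h
      · subst h; exact Or.inr (by simp)
      · obtain ⟨n, rfl⟩ : ∃ n, tz = n + 1 := ⟨tz - 1, by omega⟩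
        rcases ih ty n (fun b' hb' => hall b' (by simp [hb'])) (by simp at hc ⊢; omega) with h | h
        · exact Or.inl (h.trans (List.sublist_append_right _ _))
        · exact Or.inr (by simpa [List.replicate_succ, List.flatten_cons] using hzb.append h)

/-- greedy count of how far the alternating word `xyxyxy...` (starting with `x`
if `b = true`) can be embedded in `w`. -/
def alt (x y : ℕ) : Bool → List ℕ → ℕ
  | _, [] => 0
  | b, c :: w => if c = (if b then x else y) then alt x y (!b) w + 1 else alt x y b w

/-- the alternating word of length `k` starting with `x` if `b = true`. -/
def pat (x y : ℕ) : Bool → ℕ → List ℕ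
  | _, 0 => []
  | b, k + 1 => (if b then x else y) :: pat x y (!b) k

lemma length_pat (x y : ℕ) : ∀ b k, (pat x y b k).length = k := by
  intro b k
  induction k generalizing b with
  | zero => rfl
  | succ k ih => simp [pat, ih]

lemma alt_le_alt_not {x y : ℕ} (hxy : x ≠ y) : ∀ (w : List ℕ) (b : Bool),
    alt x y b w ≤ alt x y (!b) w + 1 := by
  intro w
  induction w with
  | nil => simp [alt]
  | cons c w ih =>
    intro b
    by_cases h1 : c = (if b then x else y)
    · by_cases h2 : c = (if !b then x else y)
      · exfalso
        cases b <;> simp_all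
      · simp only [alt, if_pos h1, if_neg h2]
        omega
    · by_cases h2 : c = (if !b then x else y)
      · simp only [alt, if_neg h1, if_pos h2, Bool.not_not]
        omega
      · simp only [alt, if_neg h1, if_neg h2]
        exact ih b

lemma le_alt_of_pat_sublist {x y : ℕ} (hxy : x ≠ y) : ∀ (w : List ℕ) (b : Bool) (k : ℕ),
    pat x y b k <+ w → k ≤ alt x y b w := by
  intro w
  induction w with
  | nil =>
    intro b k h
    rw [List.sublist_nil] at h
    have := length_pat x y b k
    rw [h] at this
    simp only [List.length_nil] at this
    omega
  | cons c w ih =>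
    intro b k h
    rcases Nat.eq_zero_or_pos k with hk | hk
    · omega
    obtain ⟨k', rfl⟩ : ∃ k', k = k' + 1 := ⟨k - 1, by omega⟩
    have h0 : (if b then x else y) :: pat x y (!b) k' <+ c :: w := h
    by_cases h1 : c = (if b then x else y)
    · simp only [alt, if_pos h1]
      rcases List.cons_sublist_cons'.mp h0 with h' | h'
      · -- pat x y b (k'+1) <+ w
        have hih := ih b (k' + 1) (by rw [pat]; exact h')
        have := alt_le_alt_not hxy w b
        omega
      · have := ih (!b) k' h'.2
        omega
    · -- head differs, whole pattern must embed in w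
      have h' : pat x y b (k' + 1) <+ w := by
        rcases List.cons_sublist_cons'.mp h0 with h' | h'
        · rw [pat]; exact h'
        · exact absurd h'.1.symm h1
      have := ih b (k' + 1) h'
      simp only [alt, if_neg h1]
      omega

lemma contains_of_rep {f : List ℕ} {l t : ℕ} (hl : 2 ≤ l) (ht : 1 ≤ t) (w : List ℕ)
    (hnd : w.Nodup) (hlen : w.length = l)
    (hsub : (List.replicate t w).flatten <+ f) :
    Contains f ((List.replicate t (List.range l)).flatten) := by
  refine ⟨fun i => w.getD i 0, ?_, ?_⟩
  · intro i hi j hj hij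
    simp only [Set.mem_setOf_eq, List.mem_flatten, List.mem_replicate] at hi hj
    obtain ⟨c, ⟨-, rfl⟩, hi⟩ := hi
    obtain ⟨c', ⟨-, rfl⟩, hj⟩ := hj
    rw [List.mem_range] at hi hj
    simp only at hij
    rw [List.getD_eq_getElem w 0 (show i < w.length by omega),
      List.getD_eq_getElem w 0 (show j < w.length by omega)] at hij
    rw [hnd.getElem_inj_iff] at hij
    exact hij
  · have hmap : (List.range l).map (fun i => w.getD i 0) = w := by
      apply List.ext_getElem (by simp [hlen])
      intro i h1 h2
      simp only [List.getElem_map, List.getElem_range]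
      exact List.getD_eq_getElem w 0 h2
    rw [List.map_flatten, List.map_replicate, hmap]
    exact hsub

lemma upper {l t : ℕ} (hl : 2 ≤ l) (ht : 1 ≤ t) (f : List ℕ)
    (hform : IsFormation (l ^ 2 ^ (2 * t - 1)) (2 * t - 1) f) :
    Contains f ((List.replicate t (List.range l)).flatten) := by
  obtain ⟨S, blocks, hS, hlen, hf, hprop⟩ := hform
  obtain ⟨T, hTS, hTcard, hTmono⟩ := iter (by omega : 1 ≤ l) blocks S
    (fun b hb => ⟨(hprop b hb).1, fun a ha => by
      rw [← List.mem_toFinset, (hprop b hb).2]; exact ha⟩)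
    (by rw [hlen, hS])
  have hTb : ∀ b ∈ blocks, ∀ a ∈ T, a ∈ b := by
    intro b hb a ha
    rw [← List.mem_toFinset, (hprop b hb).2]
    exact hTS ha
  have hchoice : ∀ b ∈ blocks, (T.sort (· ≤ ·)) <+ b ∨ (T.sort (· ≤ ·)).reverse <+ b := by
    intro b hb
    rcases hTmono b hb with h | h
    · exact Or.inl (sublist_of_incOn (hprop b hb).1 (hTb b hb) h)
    · exact Or.inr (sublist_of_decOn (hprop b hb).1 (hTb b hb) h)
  have hcount : t + t ≤ blocks.length + 1 := by rw [hlen]; omega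
  have hnd : (T.sort (· ≤ ·)).Nodup := T.sort_nodup _
  have hlensort : (T.sort (· ≤ ·)).length = l := by rw [Finset.length_sort]; exact hTcard
  rcases two_choice blocks t t hchoice hcount with h | h
  · exact contains_of_rep hl ht _ hnd hlensort (hf ▸ h)
  · exact contains_of_rep hl ht _ (by simpa using hnd) (by simpa using hlensort) (hf ▸ h)

lemma pat_rep (x y : ℕ) : ∀ t, pat x y true (2 * t) = (List.replicate t [x, y]).flatten := by
  intro t
  induction t with
  | zero => simp [pat]
  | succ t ih =>
    have h2 : 2 * (t + 1) = 2 * t + 1 + 1 := by ring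
    rw [h2]
    simp only [pat, Bool.not_true, Bool.not_false, List.replicate_succ, List.flatten_cons, ih]
    rfl

lemma altW_lt {m M : ℕ} (hmM : m < M) : ∀ k,
    alt m M true ((List.replicate k [m, M, M, m]).flatten) ≤ 2 * k + 1 ∧
    alt m M false ((List.replicate k [m, M, M, m]).flatten) ≤ 2 * k := by
  intro k
  induction k with
  | zero => simp [alt]
  | succ k ih =>
    simp only [List.flatten, List.replicate_succ, List.flatten_cons] at *
    have h1 : m ≠ M := by omega
    have h2 : M ≠ m := by omega
    constructor
    · simp [alt, h1, h2]
      omega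
    · simp [alt, h1, h2]
      omega

lemma altW_gt {m M : ℕ} (hmM : m < M) : ∀ k,
    alt M m true ((List.replicate k [m, M, M, m]).flatten) ≤ 2 * k ∧
    alt M m false ((List.replicate k [m, M, M, m]).flatten) ≤ 2 * k + 1 := by
  intro k
  induction k with
  | zero => simp [alt]
  | succ k ih =>
    simp only [List.flatten, List.replicate_succ, List.flatten_cons] at *
    have h1 : m ≠ M := by omega
    have h2 : M ≠ m := by omega
    constructor
    · simp [alt, h1, h2]
      omega
    · simp [alt, h1, h2]
      omega

lemma filter_join (p : ℕ → Bool) : ∀ L : List (List ℕ),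
    (L.flatten).filter p = (L.map (List.filter p)).flatten := by
  intro L
  induction L with
  | nil => rfl
  | cons b L ih => simp [List.flatten_cons, List.filter_append, ih]

lemma rep_join_mono {u v : List ℕ} (h : u <+ v) : ∀ n,
    (List.replicate n u).flatten <+ (List.replicate n v).flatten := by
  intro n
  induction n with
  | zero => simp
  | succ n ih =>
    simp only [List.replicate_succ, List.flatten_cons]
    exact h.append ih

lemma toFinset_range (r : ℕ) : (List.range r).toFinset = Finset.range r := by
  ext a
  simp [List.mem_toFinset, List.mem_range, Finset.mem_range]

lemma lower {l t : ℕ} (hl : 2 ≤ l) (ht : 1 ≤ t) (r : ℕ) :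
    ∃ f, IsFormation r (2 * t - 2) f ∧
      ¬Contains f ((List.replicate t (List.range l)).flatten) := by
  set A := List.range r with hA
  set blocksL := (List.replicate (t - 1) [A, A.reverse]).flatten with hbl
  have hmembl : ∀ b ∈ blocksL, b = A ∨ b = A.reverse := by
    intro b hb
    obtain ⟨c, hc, hbc⟩ := List.mem_flatten.1 hb
    rw [List.eq_of_mem_replicate hc] at hbc
    simpa using hbc
  refine ⟨blocksL.flatten, ⟨Finset.range r, blocksL, Finset.card_range r, ?_, rfl, ?_⟩, ?_⟩
  · rw [List.length_flatten]
    simp only [hbl, List.map_flatten, List.map_replicate]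
    simp [List.sum_flatten, List.sum_replicate, Nat.smul_one_eq_cast]
    omega
  · intro b hb
    rcases hmembl b hb with h | h <;> subst h
    · exact ⟨List.nodup_range (n := r), toFinset_range r⟩
    · exact ⟨List.nodup_reverse.2 (List.nodup_range (n := r)),
        by rw [List.toFinset_reverse]; exact toFinset_range r⟩
  · rintro ⟨φ, hinj, hsub⟩
    have h0u : (0 : ℕ) ∈ (List.replicate t (List.range l)).flatten :=
      List.mem_flatten.2 ⟨List.range l, List.mem_replicate.2 ⟨by omega, rfl⟩,
        List.mem_range.2 (by omega)⟩
    have h1u : (1 : ℕ) ∈ (List.replicate t (List.range l)).flatten :=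
      List.mem_flatten.2 ⟨List.range l, List.mem_replicate.2 ⟨by omega, rfl⟩,
        List.mem_range.2 (by omega)⟩
    set x := φ 0 with hx
    set y := φ 1 with hy
    have hxy : x ≠ y := by
      intro h
      have := hinj (Set.mem_setOf_eq ▸ h0u) (Set.mem_setOf_eq ▸ h1u) h
      omega
    -- [x, y] is a sublist of every mapped copy
    have h01 : [0, 1] <+ List.range l := by
      have := List.take_sublist 2 (List.range l)
      rwa [List.take_range, show min 2 l = 2 by omega,
        show List.range 2 = [0, 1] from by decide] at this
    have hcopy : [x, y] <+ (List.range l).map φ := by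
      have := h01.map φ
      simpa using this
    have hJ : (List.replicate t [x, y]).flatten <+ blocksL.flatten := by
      refine Sublist.trans ?_ hsub
      rw [List.map_flatten, List.map_replicate]
      exact rep_join_mono hcopy t
    -- x and y are letters < r
    have hmemf : ∀ a, a ∈ (((List.replicate t (List.range l)).flatten).map φ) → a < r := by
      intro a ha
      have haf := hsub.subset ha
      obtain ⟨b, hb, hab⟩ := List.mem_flatten.1 haf
      rcases hmembl b hb with h | h <;> subst h
      · exact List.mem_range.1 hab
      · exact List.mem_range.1 (List.mem_reverse.1 hab)
    have hxr : x < r := hmemf x (List.mem_map_of_mem (f := φ) h0u)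
    have hyr : y < r := hmemf y (List.mem_map_of_mem (f := φ) h1u)
    set m := min x y with hm
    set M := max x y with hM
    have hmM : m < M := by omega
    set p : ℕ → Bool := fun a => decide (a = x ∨ a = y) with hp
    have hfA : A.filter p = [m, M] := by
      refine (fun hp h1 h2 => List.Perm.eq_of_pairwise' (r := (· < ·)) h1 h2 hp) ?_ ?_ ?_
      · apply List.perm_of_nodup_nodup_toFinset_eq ((List.nodup_range (n := r)).filter _)
          (by simp [hmM.ne])
        ext a
        simp only [List.mem_toFinset, List.mem_filter, hA, List.mem_range,
          decide_eq_true_eq, hp, List.mem_cons, List.mem_singleton, List.not_mem_nil,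
          or_false]
        constructor
        · rintro ⟨-, h | h⟩ <;> subst h <;> omega
        · rintro (h | h) <;> subst h <;> omega
      · exact List.Pairwise.imp (fun h => h) ((List.pairwise_lt_range (n := r)).sublist
          List.filter_sublist)
      · simp [hmM]
    have hfB : A.reverse.filter p = [M, m] := by
      rw [List.filter_reverse, hfA]
      rfl
    have hff : blocksL.flatten.filter p = (List.replicate (t - 1) [m, M, M, m]).flatten := by
      rw [filter_join, hbl, List.map_flatten, List.map_replicate]
      have : List.map (List.filter p) [A, A.reverse] = [[m, M], [M, m]] := by
        simp [hfA, hfB]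
      rw [this]
      simp only [List.flatten, List.flatten_flatten, List.map_replicate]
      rfl
    have hJp : ((List.replicate t [x, y]).flatten).filter p = (List.replicate t [x, y]).flatten := by
      rw [List.filter_eq_self]
      intro a ha
      obtain ⟨c, hc, hac⟩ := List.mem_flatten.1 ha
      rw [List.eq_of_mem_replicate hc] at hac
      simp only [List.mem_cons, List.mem_singleton, List.not_mem_nil, or_false] at hac
      simp [hp, hac]
    have hJW : (List.replicate t [x, y]).flatten <+ (List.replicate (t - 1) [m, M, M, m]).flatten := by
      have := hJ.filter p
      rwa [hJp, hff] at this
    have halt : 2 * t ≤ alt x y true ((List.replicate (t - 1) [m, M, M, m]).flatten) :=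
      le_alt_of_pat_sublist hxy _ true (2 * t) (by rw [pat_rep]; exact hJW)
    rcases lt_or_gt_of_ne hxy with hlt | hgt
    · have hmx : m = x := by omega
      have hMy : M = y := by omega
      rw [hmx, hMy] at halt
      have := (altW_lt (by omega : x < y) (t - 1)).1
      omega
    · have hmy : m = y := by omega
      have hMx : M = x := by omega
      rw [hmy, hMx] at halt
      have := (altW_gt (by omega : y < x) (t - 1)).1
      omega

lemma step {u : List ℕ} {r s : ℕ} (h : ∀ f, IsFormation r s f → Contains f u) :
    ∀ f, IsFormation r (s + 1) f → Contains f u := by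
  rintro f ⟨S, blocks, hS, hlen, hf, hprop⟩
  have hform' : IsFormation r s (blocks.take s).flatten :=
    ⟨S, blocks.take s, hS, by rw [List.length_take]; omega, rfl,
      fun b hb => hprop b (List.take_subset s blocks hb)⟩
  obtain ⟨φ, hinj, hsub⟩ := h _ hform'
  refine ⟨φ, hinj, hsub.trans ?_⟩
  rw [hf]
  have : (blocks.take s).flatten ++ (blocks.drop s).flatten = blocks.flatten := by
    rw [← List.flatten_append, List.take_append_drop]
  rw [← this]
  exact List.sublist_append_left _ _

lemma steps {u : List ℕ} {r s : ℕ} (h : ∀ f, IsFormation r s f → Contains f u) (d : ℕ) :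
    ∀ f, IsFormation r (s + d) f → Contains f u := by
  induction d with
  | zero => exact h
  | succ d ih => exact step ih

end Stmt4

theorem stmt4 (l t : ℕ) (hl : 2 ≤ l) (ht : 1 ≤ t) :
    FWidth ((List.replicate (t) (List.range l)).flatten) (2 * t - 1) := by
  constructor
  · exact ⟨l ^ 2 ^ (2 * t - 1), fun f hf => Stmt4.upper hl ht f hf⟩
  · rintro s ⟨r, hall⟩
    by_contra hcon
    push_neg at hcon
    have hs : s + (2 * t - 2 - s) = 2 * t - 2 := by omega
    have hall' := Stmt4.steps hall (2 * t - 2 - s)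
    rw [hs] at hall'
    obtain ⟨f, hform, hnc⟩ := Stmt4.lower hl ht r
    exact hnc (hall' f hform)
end

section
/- For any sequence u with r distinct letters, fw(u) equals the minimum s such that every binary (r, s)-formation on the letters of u contains u, where a binary formation is one in which every constituent permutation equals a fixed permutation p or its reverse. -/
/-- `f` is a binary `(|S|, s)`-formation on letter set `S`: all blocks equal a
fixed permutation `p` of `S` or its reverse. -/
def IsBinaryFormationOn (S : Finset ℕ) (s : ℕ) (f : List ℕ) : Prop :=
  ∃ (p : List ℕ) (blocks : List (List ℕ)),
    p.Nodup ∧ p.toFinset = S ∧ blocks.length = s ∧ f = blocks.flatten ∧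
    ∀ b ∈ blocks, b = p ∨ b = p.reverse

/-!
Binary formations are natural in their letters: renaming the letters of the binary formation with
permutation `p` and orientation pattern `t`, or deleting some of them, gives the binary formation
with pattern `t` on the new permutation. So if every `(r, s)`-formation contains `u`, an occurrence
of `u` in the binary formation on `0, …, r - 1` with pattern `t` uses only `|u|` letters; deleting
the others and renaming gives an occurrence in any binary formation on the letters of `u` with that
pattern. Conversely, in an `(r, s)`-formation with `r` large enough, applying Erdős–Szekeres once
per block yields `|u|` letters on which every block is increasing or decreasing; restricted to them
the formation is binary, hence contains `u`.
-/

namespace List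

variable {α : Type*}

/-- A weak Erdős–Szekeres bound: the head of the list splits the tail into larger and smaller
elements, and one of the two parts is long enough for the induction hypothesis. -/
theorem exists_sublist_pairwise_lt_or_gt [LinearOrder α] :
    ∀ (a b : ℕ) (l : List α), l.Nodup → 2 ^ (a + b) ≤ l.length →
      ∃ l' : List α, l' <+ l ∧
        ((l'.length = a ∧ l'.Pairwise (· < ·)) ∨ (l'.length = b ∧ l'.Pairwise (· > ·))) := by
  intro a
  induction a with
  | zero => exact fun _ _ _ _ => ⟨[], nil_sublist _, .inl ⟨rfl, .nil⟩⟩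
  | succ a iha =>
    intro b
    induction b with
    | zero => exact fun _ _ _ => ⟨[], nil_sublist _, .inr ⟨rfl, .nil⟩⟩
    | succ b ihb =>
      rintro (_ | ⟨x, rest⟩) hl hlen
      · exact absurd hlen (by simp)
      obtain ⟨hx, hrest⟩ := nodup_cons.mp hl
      set above := rest.filter (x < ·)
      set below := rest.filter (fun y => !decide (x < y))
      have hsplit : rest.length = above.length + below.length :=
        rest.length_eq_length_filter_add _
      have hpow : 2 ^ (a + 1 + (b + 1)) = 2 * 2 ^ (a + 1 + b) := by ring
      have hpow' : 2 ^ (a + (b + 1)) = 2 ^ (a + 1 + b) := by ring_nf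
      simp only [length_cons] at hlen
      by_cases habove : 2 ^ (a + (b + 1)) ≤ above.length
      · obtain ⟨l', hl', ⟨hlen', hinc⟩ | hdec⟩ := iha (b + 1) above (hrest.filter _) habove
        · refine ⟨x :: l', (hl'.trans filter_sublist).cons_cons x, .inl ⟨by simp [hlen'], ?_⟩⟩
          refine pairwise_cons.mpr ⟨fun y hy => ?_, hinc⟩
          simpa using (mem_filter.mp (hl'.subset hy)).2
        · exact ⟨l', (hl'.trans filter_sublist).cons x, .inr hdec⟩
      · obtain ⟨l', hl', hinc | ⟨hlen', hdec⟩⟩ :=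
          ihb below (hrest.filter _) (by omega)
        · exact ⟨l', (hl'.trans filter_sublist).cons x, .inl hinc⟩
        · refine ⟨x :: l', (hl'.trans filter_sublist).cons_cons x, .inr ⟨by simp [hlen'], ?_⟩⟩
          refine pairwise_cons.mpr ⟨fun y hy => ?_, hdec⟩
          obtain ⟨hyrest, hyx⟩ := mem_filter.mp (hl'.subset hy)
          exact lt_of_le_of_ne (by simpa using hyx) (fun h => hx (h ▸ hyrest))

def SortedLTOrGT [Preorder α] (l : List α) : Prop := l.SortedLT ∨ l.SortedGT

theorem SortedLTOrGT.sublist [Preorder α] {l₁ l₂ : List α} (h : l₂.SortedLTOrGT) (hl : l₁ <+ l₂) :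
    l₁.SortedLTOrGT :=
  h.imp (fun h => (h.pairwise.sublist hl).sortedLT) (fun h => (h.pairwise.sublist hl).sortedGT)

theorem filter_mem_eq_of_sublist [DecidableEq α] {l b : List α} {T : Finset α} (hb : b.Nodup)
    (hl : l <+ b) (hT : ∀ x ∈ T, x ∈ l) : b.filter (· ∈ T) = l.filter (· ∈ T) := by
  refine ((hl.filter _).eq_of_length_le ((hb.filter _).subperm fun x hx => ?_).length_le).symm
  obtain ⟨-, hxT⟩ := mem_filter.mp hx
  exact mem_filter.mpr ⟨hT x (by simpa using hxT), hxT⟩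

theorem exists_map_eq_of_nodup [DecidableEq α] :
    ∀ {p q : List α}, p.Nodup → p.length = q.length → ∃ θ : α → α, p.map θ = q
  | [], [], _, _ => ⟨id, rfl⟩
  | x :: p, y :: q, hp, hlen => by
    obtain ⟨hx, hp⟩ := nodup_cons.mp hp
    obtain ⟨θ, hθ⟩ := exists_map_eq_of_nodup hp (by simpa using hlen)
    refine ⟨Function.update θ x y, ?_⟩
    rw [map_cons, Function.update_self, ← hθ]
    exact congrArg _ (map_congr_left fun z hz =>
      Function.update_of_ne (ne_of_mem_of_not_mem hz hx) _ _)

theorem filter_mem_eq_sort_or_reverse [LinearOrder α] {b : List α} {T : Finset α}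
    (hT : T ⊆ b.toFinset) (h : (b.filter (· ∈ T)).SortedLTOrGT) :
    b.filter (· ∈ T) = T.sort ∨ b.filter (· ∈ T) = T.sort.reverse := by
  have hmem : ∀ x, x ∈ b.filter (· ∈ T) ↔ x ∈ T.sort := fun x => by
    simpa using fun hx => mem_toFinset.mp (hT hx)
  exact h.imp (fun h => h.eq_of_mem_iff T.sortedLT_sort hmem)
    (fun h => h.eq_reverse_of_mem_iff_of_sortedLT hmem T.sortedLT_sort)

end List

open List

theorem exists_subset_forall_filter_sortedLTOrGT {α : Type*} [LinearOrder α] (k n : ℕ) :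
    ∃ N, ∀ (S : Finset α) (bs : List (List α)), bs.length = n → N ≤ S.card →
      (∀ b ∈ bs, b.Nodup ∧ b.toFinset = S) →
      ∃ T ⊆ S, T.card = k ∧ ∀ b ∈ bs, (b.filter (· ∈ T)).SortedLTOrGT := by
  induction n with
  | zero =>
    refine ⟨k, fun S bs hbs hS _ => ?_⟩
    obtain ⟨T, hTS, hT⟩ := Finset.exists_subset_card_eq hS
    exact ⟨T, hTS, hT, by simp [List.length_eq_zero_iff.mp hbs]⟩
  | succ n ih =>
    obtain ⟨N, hN⟩ := ih
    refine ⟨2 ^ (N + N), fun S bs hbs hS hperm => ?_⟩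
    obtain _ | ⟨b, bs⟩ := bs
    · simp at hbs
    obtain ⟨hb, hbS⟩ := hperm b mem_cons_self
    have hblen : b.length = S.card := by rw [← hbS, toFinset_card_of_nodup hb]
    obtain ⟨l, hlb, hl⟩ : ∃ l, l <+ b ∧ l.length = N ∧ l.SortedLTOrGT := by
      obtain ⟨l, hlb, ⟨hlen, hl⟩ | ⟨hlen, hl⟩⟩ :=
        exists_sublist_pairwise_lt_or_gt N N b hb (hblen ▸ hS)
      exacts [⟨l, hlb, hlen, .inl hl.sortedLT⟩, ⟨l, hlb, hlen, .inr hl.sortedGT⟩]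
    have hlS : l.toFinset ⊆ S := fun x hx => by simpa [← hbS] using hlb.subset (mem_toFinset.mp hx)
    obtain ⟨T, hTl, hT, hmono⟩ := hN l.toFinset (bs.map (·.filter (· ∈ l.toFinset)))
      (by simpa using hbs)
      (by rw [toFinset_card_of_nodup (hlb.nodup hb), hl.1])
      (by
        simp only [mem_map, forall_exists_index, and_imp, forall_apply_eq_imp_iff₂]
        intro c hc
        obtain ⟨hc, hcS⟩ := hperm c (mem_cons_of_mem _ hc)
        refine ⟨hc.filter _, Finset.ext fun x => ?_⟩
        simpa [← hcS] using fun hx => hlS hx)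
    refine ⟨T, hTl.trans hlS, hT, fun c hc => ?_⟩
    obtain rfl | hc := mem_cons.mp hc
    · rw [filter_mem_eq_of_sublist hb hlb fun x hx => mem_toFinset.mp (hTl hx)]
      exact hl.2.sublist filter_sublist
    · have hTl' : ∀ x ∈ c, (decide (x ∈ T) && decide (x ∈ l.toFinset)) = decide (x ∈ T) :=
        fun x _ => by simpa using fun hx => hTl hx
      simpa only [filter_filter, filter_congr hTl'] using hmono _ (mem_map_of_mem hc)

section BinaryFormation

variable {α β : Type*}

def binaryFormation (p : List α) (t : List Bool) : List α :=
  (t.map fun o => if o then p else p.reverse).flatten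

theorem binaryFormation_map (θ : α → β) (p : List α) (t : List Bool) :
    (binaryFormation p t).map θ = binaryFormation (p.map θ) t := by
  simp only [binaryFormation, map_flatten, List.map_map]
  congr 1
  exact map_congr_left fun o _ => by cases o <;> simp

theorem binaryFormation_filter (P : α → Bool) (p : List α) (t : List Bool) :
    (binaryFormation p t).filter P = binaryFormation (p.filter P) t := by
  simp only [binaryFormation, filter_flatten, List.map_map]
  congr 1
  exact map_congr_left fun o _ => by cases o <;> simp [filter_reverse]

theorem mem_of_mem_binaryFormation {p : List α} {t : List Bool} {x : α}
    (hx : x ∈ binaryFormation p t) : x ∈ p := by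
  obtain ⟨_, hb, hxb⟩ := mem_flatten.mp hx
  obtain ⟨o, -, rfl⟩ := mem_map.mp hb
  cases o <;> simpa using hxb

theorem flatten_eq_binaryFormation [DecidableEq α] {p : List α} {blocks : List (List α)}
    (h : ∀ b ∈ blocks, b = p ∨ b = p.reverse) :
    blocks.flatten = binaryFormation p (blocks.map fun b => decide (b = p)) := by
  rw [binaryFormation, List.map_map]
  congr 1
  refine (map_congr_left fun b hb => ?_).trans (map_id _) |>.symm
  by_cases hbp : b = p
  · simp [hbp]
  · obtain rfl := (h b hb).resolve_left hbp
    simp [hbp]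

end BinaryFormation

theorem isBinaryFormationOn_iff {S : Finset ℕ} {s : ℕ} {f : List ℕ} :
    IsBinaryFormationOn S s f ↔
      ∃ (p : List ℕ) (t : List Bool), p.Nodup ∧ p.toFinset = S ∧ t.length = s ∧
        f = binaryFormation p t := by
  constructor
  · rintro ⟨p, blocks, hp, hpS, rfl, rfl, hblocks⟩
    exact ⟨p, _, hp, hpS, length_map _, flatten_eq_binaryFormation hblocks⟩
  · rintro ⟨p, t, hp, hpS, rfl, rfl⟩
    refine ⟨p, _, hp, hpS, length_map _, rfl, fun b hb => ?_⟩
    obtain ⟨o, -, rfl⟩ := mem_map.mp hb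
    cases o <;> simp

theorem isFormation_binaryFormation {p : List ℕ} (hp : p.Nodup) (t : List Bool) :
    IsFormation p.length t.length (binaryFormation p t) := by
  refine ⟨p.toFinset, _, toFinset_card_of_nodup hp, length_map _, rfl, fun b hb => ?_⟩
  obtain ⟨o, -, rfl⟩ := mem_map.mp hb
  cases o <;> simp [hp]

namespace Contains

variable {f g u : List ℕ}

theorem map (h : Contains f u) {θ : ℕ → ℕ} (hθ : Set.InjOn θ {a | a ∈ f}) :
    Contains (f.map θ) u := by
  obtain ⟨φ, hφ, hu⟩ := h
  refine ⟨θ ∘ φ, hθ.comp hφ fun a ha => hu.subset (mem_map_of_mem ha), ?_⟩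
  simpa only [List.map_map] using hu.map θ

theorem mono (h : Contains f u) (hfg : f <+ g) : Contains g u :=
  let ⟨φ, hφ, hu⟩ := h
  ⟨φ, hφ, hu.trans hfg⟩

theorem exists_filter (h : Contains f u) :
    ∃ V : Finset ℕ, V ⊆ f.toFinset ∧ V.card = u.toFinset.card ∧ Contains (f.filter (· ∈ V)) u := by
  obtain ⟨φ, hφ, hu⟩ := h
  refine ⟨u.toFinset.image φ, fun x hx => ?_, Finset.card_image_of_injOn (by simpa using hφ),
    φ, hφ, ?_⟩
  · obtain ⟨a, ha, rfl⟩ := Finset.mem_image.mp hx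
    exact mem_toFinset.mpr (hu.subset (mem_map_of_mem (mem_toFinset.mp ha)))
  · have hself : (u.map φ).filter (· ∈ u.toFinset.image φ) = u.map φ :=
      filter_eq_self.mpr fun x hx => by simpa using mem_map.mp hx
    exact hself ▸ hu.filter _

theorem binaryFormation_of_length_eq {p q : List ℕ} {t : List Bool}
    (h : Contains (binaryFormation p t) u) (hp : p.Nodup) (hq : q.Nodup)
    (hlen : p.length = q.length) : Contains (binaryFormation q t) u := by
  obtain ⟨θ, rfl⟩ := exists_map_eq_of_nodup hp hlen
  rw [← binaryFormation_map]
  exact h.map fun x hx y hy => inj_on_of_nodup_map hq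
    (mem_of_mem_binaryFormation hx) (mem_of_mem_binaryFormation hy)

end Contains

theorem Contains.of_isBinaryFormationOn {u : List ℕ} {r s : ℕ}
    (hF : ∀ f, IsFormation r s f → Contains f u) {f : List ℕ}
    (hf : IsBinaryFormationOn u.toFinset s f) : Contains f u := by
  obtain ⟨p, t, hp, hpu, rfl, rfl⟩ := isBinaryFormationOn_iff.mp hf
  have hr : Contains (binaryFormation (range r) t) u := by
    have hformation := isFormation_binaryFormation (nodup_range (n := r)) t
    rw [length_range] at hformation
    exact hF _ hformation
  obtain ⟨V, hVf, hV, hVu⟩ := hr.exists_filter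
  rw [binaryFormation_filter] at hVu
  refine hVu.binaryFormation_of_length_eq (nodup_range.filter _) hp ?_
  have hVr : ∀ x ∈ V, x ∈ range r := fun x hx =>
    mem_of_mem_binaryFormation (mem_toFinset.mp (hVf hx))
  rw [← toFinset_card_of_nodup (nodup_range.filter _), ← toFinset_card_of_nodup hp, hpu, ← hV]
  congr 1
  ext x
  simpa using fun hx => mem_range.mp (hVr x hx)

theorem exists_forall_isFormation_contains {u : List ℕ} {s : ℕ}
    (hB : ∀ f, IsBinaryFormationOn u.toFinset s f → Contains f u) :
    ∃ r, ∀ f, IsFormation r s f → Contains f u := by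
  obtain ⟨N, hN⟩ := exists_subset_forall_filter_sortedLTOrGT (α := ℕ) u.toFinset.card s
  refine ⟨N, fun f ⟨S, bs, hS, hbs, hf, hperm⟩ => ?_⟩
  obtain ⟨T, hTS, hT, hmono⟩ := hN S bs hbs hS.ge hperm
  set restricted := bs.map (·.filter (· ∈ T))
  have hrestricted : ∀ c ∈ restricted, c = T.sort ∨ c = T.sort.reverse := by
    simp only [restricted, mem_map, forall_exists_index, and_imp, forall_apply_eq_imp_iff₂]
    exact fun b hb => filter_mem_eq_sort_or_reverse ((hperm b hb).2 ▸ hTS) (hmono b hb)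
  set t := restricted.map fun c => decide (c = T.sort)
  have hu : Contains (binaryFormation u.dedup t) u :=
    hB _ (isBinaryFormationOn_iff.mpr
      ⟨u.dedup, t, nodup_dedup u, by ext; simp, by simp [t, restricted, hbs], rfl⟩)
  have hfT : f.filter (· ∈ T) = binaryFormation T.sort t := by
    rw [hf, filter_flatten, flatten_eq_binaryFormation hrestricted]
  refine (hu.binaryFormation_of_length_eq (nodup_dedup u) (T.sort_nodup _) ?_).mono
    (hfT ▸ filter_sublist)
  rw [Finset.length_sort, hT, card_toFinset]

theorem stmt5 (u : List ℕ) (w : ℕ) :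
    FWidth u w ↔
      IsLeast {s | ∀ f, IsBinaryFormationOn u.toFinset s f → Contains f u} w := by
  have hsets : {s | ∃ r, ∀ f, IsFormation r s f → Contains f u} =
      {s | ∀ f, IsBinaryFormationOn u.toFinset s f → Contains f u} :=
    Set.ext fun _ => ⟨fun ⟨_, hF⟩ _ => Contains.of_isBinaryFormationOn hF,
      exists_forall_isFormation_contains⟩
  rw [FWidth, hsets]
end

section
/- Any concatenation of 2t-1 permutations of the set {x, y, z}, each permutation equal to x y z or z y x, contains (x y z)^t or (z y x)^t as a subsequence. -/
theorem stmt6 (t : ℕ) (x y z : ℕ) (hxy : x ≠ y) (hxz : x ≠ z) (hyz : y ≠ z)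
    (blocks : List (List ℕ)) (hlen : blocks.length = 2 * t - 1)
    (hblocks : ∀ b ∈ blocks, b = [x, y, z] ∨ b = [z, y, x]) :
    ((List.replicate (t) [x, y, z]).flatten).Sublist blocks.flatten ∨
      ((List.replicate (t) [z, y, x]).flatten).Sublist blocks.flatten := by
  have hjoin : ∀ l₁ l₂ : List (List ℕ), l₁.Sublist l₂ → l₁.flatten.Sublist l₂.flatten := by
    intro l₁ l₂ h
    induction h with
    | slnil => simp
    | cons b _ ih => exact ih.trans (List.sublist_append_right _ _)
    | cons_cons b _ ih => exact ih.append_left b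
  have hsum : ∀ bs : List (List ℕ), (∀ b ∈ bs, b = [x, y, z] ∨ b = [z, y, x]) →
      bs.length ≤ bs.count [x, y, z] + bs.count [z, y, x] := by
    intro bs hbs
    induction bs with
    | nil => simp
    | cons b bs ih =>
      have hb := hbs b (List.mem_cons_self)
      have ihs := ih (fun c hc => hbs c (List.mem_cons_of_mem _ hc))
      rcases hb with hb | hb <;> subst hb <;>
        simp [List.count_cons, hxz, Ne.symm hxz] <;> omega
  have hs := hsum blocks hblocks
  rw [hlen] at hs
  have h : t ≤ blocks.count [x, y, z] ∨ t ≤ blocks.count [z, y, x] := by omega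
  rcases h with h | h
  · exact Or.inl (hjoin _ _ ((List.replicate_sublist_iff).mpr h))
  · exact Or.inr (hjoin _ _ ((List.replicate_sublist_iff).mpr h))
end

section
/- For every t ≥ 1 and every binary (3, 2t+3)-formation f on permutations xyz and zyx such that the first 2t-1 blocks contain (x y z)^{t+1} as a subsequence: f contains the subsequence (x y z)^t y x z y x z, or f contains the subsequence (y z x)^t z y x z y x. -/
lemma numKey (c1 c2 c3 c4 : List ℕ)
    (h1 : c1 = [0,1,2] ∨ c1 = [2,1,0]) (h2 : c2 = [0,1,2] ∨ c2 = [2,1,0])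
    (h3 : c3 = [0,1,2] ∨ c3 = [2,1,0]) (h4 : c4 = [0,1,2] ∨ c4 = [2,1,0]) :
    ([1,0,2,1,0,2] : List ℕ).Sublist ([0,1,2] ++ (c1 ++ (c2 ++ (c3 ++ c4)))) ∨
    ([2,1,0,2,1,0] : List ℕ).Sublist ([1,2] ++ (c1 ++ (c2 ++ (c3 ++ c4)))) := by
  rcases h1 with rfl|rfl <;> rcases h2 with rfl|rfl <;> rcases h3 with rfl|rfl <;>
    rcases h4 with rfl|rfl <;> decide

lemma letterKey (x y z : ℕ) (b1 b2 b3 b4 : List ℕ)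
    (h1 : b1 = [x,y,z] ∨ b1 = [z,y,x]) (h2 : b2 = [x,y,z] ∨ b2 = [z,y,x])
    (h3 : b3 = [x,y,z] ∨ b3 = [z,y,x]) (h4 : b4 = [x,y,z] ∨ b4 = [z,y,x]) :
    ([y,x,z,y,x,z] : List ℕ).Sublist ([x,y,z] ++ (b1 ++ (b2 ++ (b3 ++ b4)))) ∨
    ([z,y,x,z,y,x] : List ℕ).Sublist ([y,z] ++ (b1 ++ (b2 ++ (b3 ++ b4)))) := by
  set ψ : ℕ → ℕ := fun n => if n = 0 then x else if n = 1 then y else z with hψ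
  have conv : ∀ b : List ℕ, (b = [x,y,z] ∨ b = [z,y,x]) →
      ∃ c, (c = [0,1,2] ∨ c = [2,1,0]) ∧ b = c.map ψ := by
    rintro b (rfl|rfl)
    · exact ⟨[0,1,2], Or.inl rfl, by simp [hψ]⟩
    · exact ⟨[2,1,0], Or.inr rfl, by simp [hψ]⟩
  obtain ⟨c1, hc1, rfl⟩ := conv b1 h1
  obtain ⟨c2, hc2, rfl⟩ := conv b2 h2
  obtain ⟨c3, hc3, rfl⟩ := conv b3 h3
  obtain ⟨c4, hc4, rfl⟩ := conv b4 h4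
  rcases numKey c1 c2 c3 c4 hc1 hc2 hc3 hc4 with h | h
  · left; simpa [hψ] using h.map ψ
  · right; simpa [hψ] using h.map ψ

lemma repShift (x y z : ℕ) : ∀ t : ℕ, (List.replicate (t+1) [x,y,z]).flatten
    = x :: ((List.replicate t [y,z,x]).flatten ++ [y,z])
  | 0 => by simp
  | (n+1) => by
      have ih := repShift x y z n
      simp only [List.replicate_succ, List.flatten_cons] at *
      simp [ih]

theorem stmt8 (t : ℕ) (ht : 1 ≤ t) (x y z : ℕ)
    (hxy : x ≠ y) (hxz : x ≠ z) (hyz : y ≠ z)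
    (blocks : List (List ℕ)) (hlen : blocks.length = 2 * t + 3)
    (hblocks : ∀ b ∈ blocks, b = [x, y, z] ∨ b = [z, y, x])
    (hfirst : ((List.replicate (t + 1) [x, y, z]).flatten).Sublist (blocks.take (2 * t - 1)).flatten) :
    ((List.replicate (t) [x, y, z]).flatten ++ [y, x, z, y, x, z]).Sublist blocks.flatten ∨
      ((List.replicate (t) [y, z, x]).flatten ++ [z, y, x, z, y, x]).Sublist blocks.flatten := by
  have hdlen : (blocks.drop (2 * t - 1)).length = 4 := by
    rw [List.length_drop, hlen]; omega
  obtain ⟨b1, b2, b3, b4, hl1⟩ : ∃ a b c d, blocks.drop (2 * t - 1) = [a, b, c, d] := by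
    rcases h : blocks.drop (2 * t - 1) with _ | ⟨a, _ | ⟨b, _ | ⟨c, _ | ⟨d, l⟩⟩⟩⟩ <;>
      rw [h] at hdlen <;> simp at hdlen
    exact ⟨a, b, c, d, by rw [hdlen]⟩
  have hmem : ∀ b ∈ blocks.drop (2 * t - 1), b = [x,y,z] ∨ b = [z,y,x] := fun b hb =>
    hblocks b ((List.drop_sublist _ _).mem hb)
  rw [hl1] at hmem
  have h1 := hmem b1 (by simp)
  have h2 := hmem b2 (by simp)
  have h3 := hmem b3 (by simp)
  have h4 := hmem b4 (by simp)
  have hsplit : blocks.flatten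
      = (blocks.take (2 * t - 1)).flatten ++ (b1 ++ (b2 ++ (b3 ++ b4))) := by
    conv_lhs => rw [← List.take_append_drop (2 * t - 1) blocks]
    rw [hl1]
    simp
  have hA : ((List.replicate t [x,y,z]).flatten ++ [x,y,z]).Sublist
      (blocks.take (2 * t - 1)).flatten := by
    have e : (List.replicate (t+1) [x,y,z]).flatten
        = (List.replicate t [x,y,z]).flatten ++ [x,y,z] := by
      rw [List.replicate_succ']
      simp
    rwa [e] at hfirst
  have hB : ((List.replicate t [y,z,x]).flatten ++ [y,z]).Sublist
      (blocks.take (2 * t - 1)).flatten := by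
    rw [repShift] at hfirst
    exact (List.sublist_cons_self x _).trans hfirst
  rcases letterKey x y z b1 b2 b3 b4 h1 h2 h3 h4 with h | h
  · left
    rw [hsplit]
    have s1 : ((List.replicate t [x,y,z]).flatten ++ [y,x,z,y,x,z]).Sublist
        ((List.replicate t [x,y,z]).flatten ++ ([x,y,z] ++ (b1 ++ (b2 ++ (b3 ++ b4))))) :=
      (List.Sublist.refl _).append h
    have s2 : ((List.replicate t [x,y,z]).flatten ++ ([x,y,z] ++ (b1 ++ (b2 ++ (b3 ++ b4))))).Sublist
        ((blocks.take (2 * t - 1)).flatten ++ (b1 ++ (b2 ++ (b3 ++ b4)))) := by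
      rw [← List.append_assoc]
      exact hA.append (List.Sublist.refl _)
    exact s1.trans s2
  · right
    rw [hsplit]
    have s1 : ((List.replicate t [y,z,x]).flatten ++ [z,y,x,z,y,x]).Sublist
        ((List.replicate t [y,z,x]).flatten ++ ([y,z] ++ (b1 ++ (b2 ++ (b3 ++ b4))))) :=
      (List.Sublist.refl _).append h
    have s2 : ((List.replicate t [y,z,x]).flatten ++ ([y,z] ++ (b1 ++ (b2 ++ (b3 ++ b4))))).Sublist
        ((blocks.take (2 * t - 1)).flatten ++ (b1 ++ (b2 ++ (b3 ++ b4)))) := by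
      rw [← List.append_assoc]
      exact hB.append (List.Sublist.refl _)
    exact s1.trans s2
end

section
/- Every binary (3, 4)-formation on the permutations xyz and zyx, except the two formations zyx xyz zyx xyz and zyx xyz xyz zyx, has at least one of the following subsequences: x z y x z y; x y x z y x z; x y z y x z y x; z y x z x y z x y; z y x z y z x y z x; z y x z y x y z x y z. -/
/-! Subsequence containment is preserved by renaming letters, and every binary formation over
`x, y, z` is the image under `![x, y, z]` of a binary formation over `Fin 3`. So it suffices to
check the sixteen formations over `Fin 3`, a finite computation. -/

theorem List.exists_mem_sections_replicate_map_eq {α β : Type*} {S : List (List α)} {f : α → β} :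
    ∀ {L : List (List β)}, (∀ b ∈ L, b ∈ S.map (List.map f)) →
      ∃ K ∈ (List.replicate L.length S).sections, L = K.map (List.map f)
  | [], _ => ⟨[], by simp⟩
  | b :: L, h => by
    obtain ⟨a, ha, rfl⟩ := List.mem_map.1 (h b List.mem_cons_self)
    obtain ⟨K, hK, rfl⟩ :=
      List.exists_mem_sections_replicate_map_eq fun c hc => h c (List.mem_cons_of_mem _ hc)
    refine ⟨a :: K, ?_, rfl⟩
    simp only [List.length_cons, List.replicate_succ, List.mem_sections] at hK ⊢
    exact List.Forall₂.cons ha hK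

namespace BinaryFormation

-- The letters `0, 1, 2` of `Fin 3` stand for `x, y, z`.
abbrev xyz : List (Fin 3) := [0, 1, 2]

abbrev zyx : List (Fin 3) := [2, 1, 0]

def patterns : List (List (Fin 3)) :=
  [[0, 2, 1, 0, 2, 1], [0, 1, 0, 2, 1, 0, 2], [0, 1, 2, 1, 0, 2, 1, 0],
    [2, 1, 0, 2, 0, 1, 2, 0, 1], [2, 1, 0, 2, 1, 2, 0, 1, 2, 0],
    [2, 1, 0, 2, 1, 0, 1, 2, 0, 1, 2]]

theorem exists_pattern_sublist_flatten :
    ∀ K ∈ (List.replicate 4 [xyz, zyx]).sections,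
      K ≠ [zyx, xyz, zyx, xyz] → K ≠ [zyx, xyz, xyz, zyx] →
      ∃ p ∈ patterns, p.Sublist K.flatten := by
  decide

end BinaryFormation

open BinaryFormation in
theorem stmt19_general (x y z : ℕ)
    (blocks : List (List ℕ)) (hlen : blocks.length = 4)
    (hblocks : ∀ b ∈ blocks, b = [x, y, z] ∨ b = [z, y, x])
    (hexc : blocks ≠ [[z, y, x], [x, y, z], [z, y, x], [x, y, z]] ∧ blocks ≠ [[z, y, x], [x, y, z], [x, y, z], [z, y, x]]) :
    ([x, z, y, x, z, y]).Sublist blocks.flatten ∨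
      ([x, y, x, z, y, x, z]).Sublist blocks.flatten ∨
      ([x, y, z, y, x, z, y, x]).Sublist blocks.flatten ∨
      ([z, y, x, z, x, y, z, x, y]).Sublist blocks.flatten ∨
      ([z, y, x, z, y, z, x, y, z, x]).Sublist blocks.flatten ∨
      ([z, y, x, z, y, x, y, z, x, y, z]).Sublist blocks.flatten := by
  set ρ : Fin 3 → ℕ := ![x, y, z]
  obtain ⟨K, hK, rfl⟩ :=
    List.exists_mem_sections_replicate_map_eq (S := [xyz, zyx]) (f := ρ) (by simpa [ρ] using hblocks)
  rw [hlen] at hK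
  obtain ⟨p, hp, hsub⟩ := exists_pattern_sublist_flatten K hK
    (by rintro rfl; exact hexc.1 rfl) (by rintro rfl; exact hexc.2 rfl)
  have hsub_map := hsub.map ρ
  rw [List.map_flatten] at hsub_map
  simp only [patterns, List.mem_cons, List.not_mem_nil, or_false] at hp
  rcases hp with rfl | rfl | rfl | rfl | rfl | rfl <;> simp [ρ] at hsub_map ⊢ <;> simp [hsub_map]

theorem stmt19 (x y z : ℕ) (hxy : x ≠ y) (hxz : x ≠ z) (hyz : y ≠ z)
    (blocks : List (List ℕ)) (hlen : blocks.length = 4)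
    (hblocks : ∀ b ∈ blocks, b = [x, y, z] ∨ b = [z, y, x])
    (hexc : blocks ≠ [[z, y, x], [x, y, z], [z, y, x], [x, y, z]] ∧ blocks ≠ [[z, y, x], [x, y, z], [x, y, z], [z, y, x]]) :
    ([x, z, y, x, z, y]).Sublist blocks.flatten ∨
      ([x, y, x, z, y, x, z]).Sublist blocks.flatten ∨
      ([x, y, z, y, x, z, y, x]).Sublist blocks.flatten ∨
      ([z, y, x, z, x, y, z, x, y]).Sublist blocks.flatten ∨
      ([z, y, x, z, y, z, x, y, z, x]).Sublist blocks.flatten ∨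
      ([z, y, x, z, y, x, y, z, x, y, z]).Sublist blocks.flatten :=
  stmt19_general x y z blocks hlen hblocks hexc
end
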